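/- (Step rule) For the generalized parameterized greatest fixed point Ĝ_f(r,g) := r ⊔ G_f(r ⊔ g), we have f(Ĝ_f(g,g)) ⊑ Ĝ_f(r,g) for all r, g with r ⊑ g. -/

import Mathlib

def pG {C : Type*} [CompleteLattice C] (f : C →o C) (r : C) : C :=
  OrderHom.gfp ⟨fun y => f (r ⊔ y), fun _ _ h => f.mono (sup_le_sup_left h r)⟩

def gpG {C : Type*} [CompleteLattice C] (f : C →o C) (r g : C) : C :=
  r ⊔ pG f (r ⊔ g)

section

variable {C : Type*} [CompleteLattice C] (f : C →o C)

theorem map_sup_pG (r : C) : f (r ⊔ pG f r) = pG f r :=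
  OrderHom.map_gfp ⟨fun y => f (r ⊔ y), _⟩

theorem pG_mono : Monotone (pG f) :=
  fun _ _ hrs => OrderHom.gfp.mono fun _ => f.mono (sup_le_sup_right hrs _)

theorem gpG_self (g : C) : gpG f g g = g ⊔ pG f g := by
  rw [gpG, sup_idem]

end

theorem gpG_step_general {C : Type*} [CompleteLattice C] (f : C →o C) (r g : C) :
    f (gpG f g g) ≤ gpG f r g :=
  calc f (gpG f g g) = pG f g := by rw [gpG_self, map_sup_pG]
    _ ≤ pG f (r ⊔ g) := pG_mono f le_sup_right
    _ ≤ gpG f r g := le_sup_right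

theorem gpG_step {C : Type*} [CompleteLattice C] (f : C →o C) (r g : C) (hrg : r ≤ g) :
    f (gpG f g g) ≤ gpG f r g :=
  gpG_step_general f r g
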